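/- Let d ≥ 1 and let b : {0,…,d−1} × {0,…,d−1} → ℤ≥0 ∪ {∞} be such that for every i there exists a finite sequence i = i_1, i_2, …, i_k = 0 in {0,…,d−1} with all b_{i_{ℓ+1} i_ℓ} finite. Let A = { a ∈ ℤ^d : a_0 = 0 and a_i − a_j ≤ b_{ij} for all i, j } (inequalities with b_{ij} = ∞ being vacuous). For each i define m_i as the maximum, over all finite sequences i = i_1, i_2, …, i_k = 0 in {0,…,d−1}, of ∑_{ℓ=1}^{k−1} (−b_{i_{ℓ+1} i_ℓ}). Then each m_i is a well-defined (attained, finite) maximum, the tuple m = (m_0, m_1, …, m_{d−1}) with m_0 = 0 belongs to A, and for every a ∈ A one has m_i ≤ a_i for all i; i.e., m is the componentwise minimum of A. -/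

import Mathlib

/-- The cost `∑_{ℓ=1}^{k-1} b_{i_{ℓ+1} i_ℓ}` of a sequence `i_1, …, i_k` of vertices,
with values in `WithTop ℤ` (`⊤` meaning some `b`-value along the sequence is infinite). -/
def pathCost {d : ℕ} (b : Fin (d + 1) → Fin (d + 1) → WithTop ℤ) :
    List (Fin (d + 1)) → WithTop ℤ
  | [] => 0
  | [_] => 0
  | i :: j :: rest => b j i + pathCost b (j :: rest)

/-- The set `A` of integral acceptable shiftings: `a_0 = 0` and `a_i - a_j ≤ b_{ij}` for all
`i, j` (constraints with `b_{ij} = ∞` are vacuous). -/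
def shiftingsSet {d : ℕ} (b : Fin (d + 1) → Fin (d + 1) → WithTop ℤ) :
    Set (Fin (d + 1) → ℤ) :=
  {a | a 0 = 0 ∧ ∀ i j, ((a i - a j : ℤ) : WithTop ℤ) ≤ b i j}

/-! `-m_i` is the shortest-path distance from `i` to `0` for the weights `b`. Summing the
constraints `a_{i_{ℓ+1}} - a_{i_ℓ} ≤ b_{i_{ℓ+1} i_ℓ}` along a path from `i` to `0` gives
`m_i ≤ a_i`, and prepending the edge `j → i` to an optimal path from `i` gives the triangle
inequality `m_i - b_{ij} ≤ m_j`, i.e. `m ∈ A`. The maxima exist because the weights `-b` are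
nonpositive. -/

namespace PathCost

variable {d : ℕ} (b : Fin (d + 1) → Fin (d + 1) → WithTop ℤ)

def negCosts (i t : Fin (d + 1)) : Set ℤ :=
  {s | ∃ l : List (Fin (d + 1)),
    l.head? = some i ∧ l.getLast? = some t ∧ pathCost b l = ((-s : ℤ) : WithTop ℤ)}

theorem pathCost_cons_of_head? {i : Fin (d + 1)} {l : List (Fin (d + 1))}
    (hl : l.head? = some i) (j : Fin (d + 1)) :
    pathCost b (j :: l) = b i j + pathCost b l := by
  cases l with
  | nil => simp at hl
  | cons p rest =>
    obtain rfl : p = i := by simpa using hl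
    rfl

theorem pathCost_nonneg (hb : ∀ i j, 0 ≤ b i j) : ∀ l, 0 ≤ pathCost b l
  | [] => le_rfl
  | [_] => le_rfl
  | i :: j :: rest => add_nonneg (hb j i) (pathCost_nonneg hb (j :: rest))

theorem sub_le_pathCost {a : Fin (d + 1) → ℤ}
    (ha : ∀ i j, ((a i - a j : ℤ) : WithTop ℤ) ≤ b i j) :
    ∀ {l : List (Fin (d + 1))} {i j : Fin (d + 1)},
      l.head? = some i → l.getLast? = some j → ((a j - a i : ℤ) : WithTop ℤ) ≤ pathCost b l
  | [], _, _, hi, _ => by simp at hi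
  | [p], i, j, hi, hj => by
      obtain rfl : p = i := by simpa using hi
      obtain rfl : p = j := by simpa using hj
      simp [pathCost]
  | p :: q :: rest, i, j, hi, hj => by
      obtain rfl : p = i := by simpa using hi
      rw [List.getLast?_cons_cons] at hj
      have hrest := sub_le_pathCost ha (l := q :: rest) (i := q) rfl hj
      calc ((a j - a p : ℤ) : WithTop ℤ)
          = ((a q - a p : ℤ) : WithTop ℤ) + ((a j - a q : ℤ) : WithTop ℤ) := by
            rw [← WithTop.coe_add, add_comm, sub_add_sub_cancel]
        _ ≤ b q p + pathCost b (q :: rest) := add_le_add (ha q p) hrest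

theorem le_sub_of_mem_negCosts {a : Fin (d + 1) → ℤ}
    (ha : ∀ i j, ((a i - a j : ℤ) : WithTop ℤ) ≤ b i j) {i t : Fin (d + 1)} {s : ℤ}
    (hs : s ∈ negCosts b i t) : s ≤ a i - a t := by
  obtain ⟨l, hi, ht, hl⟩ := hs
  have := sub_le_pathCost b ha hi ht
  rw [hl] at this
  have : a t - a i ≤ -s := by exact_mod_cast this
  omega

theorem nonpos_of_mem_negCosts (hb : ∀ i j, 0 ≤ b i j) {i t : Fin (d + 1)} {s : ℤ}
    (hs : s ∈ negCosts b i t) : s ≤ 0 := by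
  obtain ⟨l, -, -, hl⟩ := hs
  have := pathCost_nonneg b hb l
  rw [hl] at this
  have : (0 : ℤ) ≤ -s := by exact_mod_cast this
  omega

theorem isGreatest_negCosts_self (hb : ∀ i j, 0 ≤ b i j) (t : Fin (d + 1)) :
    IsGreatest (negCosts b t t) 0 :=
  ⟨⟨[t], rfl, rfl, rfl⟩, fun _ hs => nonpos_of_mem_negCosts b hb hs⟩

theorem exists_isGreatest_negCosts (hb : ∀ i j, 0 ≤ b i j) {i t : Fin (d + 1)}
    (hconn : ∃ l : List (Fin (d + 1)),
      l.head? = some i ∧ l.getLast? = some t ∧ pathCost b l ≠ ⊤) :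
    ∃ m, IsGreatest (negCosts b i t) m := by
  obtain ⟨l, hi, ht, hfin⟩ := hconn
  obtain ⟨c, hc⟩ := WithTop.ne_top_iff_exists.mp hfin
  have hne : (negCosts b i t).Nonempty := ⟨-c, l, hi, ht, by rw [neg_neg, hc]⟩
  obtain ⟨m, hm, hmax⟩ :=
    Int.exists_greatest_of_bdd ⟨0, fun _ hs => nonpos_of_mem_negCosts b hb hs⟩ hne
  exact ⟨m, hm, hmax⟩

theorem sub_mem_negCosts {i j t : Fin (d + 1)} {s c : ℤ} (hs : s ∈ negCosts b i t)
    (hc : b i j = c) : s - c ∈ negCosts b j t := by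
  obtain ⟨l, hi, ht, hl⟩ := hs
  refine ⟨j :: l, rfl, ?_, ?_⟩
  · cases l with
    | nil => simp at hi
    | cons p rest => rwa [List.getLast?_cons_cons]
  · rw [pathCost_cons_of_head? b hi, hc, hl, ← WithTop.coe_add]
    congr 1
    ring

theorem sub_le_of_isGreatest_negCosts {i j t : Fin (d + 1)} {mi mj : ℤ}
    (hi : IsGreatest (negCosts b i t) mi) (hj : IsGreatest (negCosts b j t) mj) :
    ((mi - mj : ℤ) : WithTop ℤ) ≤ b i j := by
  induction hc : b i j using WithTop.recTopCoe with
  | top => exact le_top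
  | coe c =>
    have := hj.2 (sub_mem_negCosts b hi.1 hc)
    exact WithTop.coe_le_coe.mpr (by omega)

end PathCost

open PathCost in
/-- Let `d ≥ 1` and `b : {0,…,d-1}² → ℤ≥0 ∪ {∞}` be such that every vertex
is connected to `0` by a finite-cost sequence. Define `m_i` as the maximum over sequences
`i = i_1, …, i_k = 0` of `∑ (-b_{i_{ℓ+1} i_ℓ})`. Then each `m_i` is a well-defined attained
maximum, `m ∈ A` (with `m_0 = 0`), and `m` is the componentwise minimum of `A`. -/
theorem statement4 (d : ℕ) (b : Fin (d + 1) → Fin (d + 1) → WithTop ℤ)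
    (hb : ∀ i j, 0 ≤ b i j)
    (hconn : ∀ i : Fin (d + 1), ∃ l : List (Fin (d + 1)),
      l.head? = some i ∧ l.getLast? = some 0 ∧ pathCost b l ≠ ⊤) :
    ∃ m : Fin (d + 1) → ℤ,
      (∀ i, IsGreatest {s : ℤ | ∃ l : List (Fin (d + 1)),
          l.head? = some i ∧ l.getLast? = some 0 ∧
          pathCost b l = ((-s : ℤ) : WithTop ℤ)} (m i)) ∧
      m 0 = 0 ∧
      m ∈ shiftingsSet b ∧
      ∀ a ∈ shiftingsSet b, ∀ i, m i ≤ a i := by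
  choose m hm using fun i => exists_isGreatest_negCosts b hb (hconn i)
  have hm0 : m 0 = 0 := (hm 0).unique (isGreatest_negCosts_self b hb 0)
  refine ⟨m, hm, hm0, ⟨hm0, fun i j => sub_le_of_isGreatest_negCosts b (hm i) (hm j)⟩, ?_⟩
  rintro a ⟨ha0, ha⟩ i
  simpa [ha0] using le_sub_of_mem_negCosts b ha (hm i).1
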